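/- arXiv:2007.14045 — 3 statements merged into one kernel-verified Lean document; each statement's English description precedes it below -/
import Mathlib

section
/- With the uniform distribution, for any Boolean classifier M over a finite feature set X with |X| = n and any entity e, Σ_{x∈X} SHAP(M,e,x) = M(e) − #sat(M)/2^n, where #sat(M) is the number of entities accepted by M. -/
/-!
SHAP scores are the Shapley values of the game `S ↦ φ(M, e, S)`, so by efficiency they sum to
`φ(M, e, X) - φ(M, e, ∅) = M(e) - #sat(M) / 2ⁿ`. Efficiency itself follows by regrouping the
double sum by coalitions `T`: `T` enters with weight `|T| w(|T| - 1)` and leaves with weight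
`(n - |T|) w(|T|)`, and both equal `|T|! (n - |T|)! / n!` except that the first vanishes at
`T = ∅` and the second at `T = X`.
-/

open Finset

variable {X : Type*} [Fintype X] [DecidableEq X]

/-- The entities consistent with `e` on `S`. -/
def cw (e : X → Bool) (S : Finset X) : Finset (X → Bool) :=
  Finset.univ.filter (fun e' => ∀ x ∈ S, e' x = e x)

/-- `φ(M,e,S)` under the uniform distribution. -/
noncomputable def phi (M : (X → Bool) → Bool) (e : X → Bool) (S : Finset X) : ℝ :=
  (1 / 2 ^ (Sᶜ.card)) * ∑ e' ∈ cw e S, (if M e' then (1 : ℝ) else 0)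

/-- The SHAP score of feature `x` on entity `e` w.r.t. classifier `M`. -/
noncomputable def shap (M : (X → Bool) → Bool) (e : X → Bool) (x : X) : ℝ :=
  ∑ S ∈ (Finset.univ.erase x).powerset,
    ((Nat.factorial S.card : ℝ) * (Nat.factorial (Fintype.card X - S.card - 1)) /
        (Nat.factorial (Fintype.card X))) *
      (phi M e (insert x S) - phi M e S)
/-- Number of entities accepted by `M`. -/
def ssat (M : (X → Bool) → Bool) : ℕ :=
  (Finset.univ.filter (fun e' : X → Bool => M e' = true)).card

namespace Shapley

open Nat

variable {β : Type*} [AddCommMonoid β]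

theorem sum_powerset_erase_insert (x : X) (g : Finset X → β) :
    ∑ S ∈ (univ.erase x).powerset, g (insert x S) = ∑ T with x ∈ T, g T :=
  sum_nbij' (insert x) (erase · x) (by simp) (by simp [subset_erase])
    (fun S hS => erase_insert (by simpa [subset_erase] using hS))
    (fun T hT => insert_erase (by simpa using hT)) (fun _ _ => rfl)

theorem sum_sum_powerset_erase_insert (g : Finset X → β) :
    ∑ x, ∑ S ∈ (univ.erase x).powerset, g (insert x S) = ∑ T : Finset X, T.card • g T := by
  simp_rw [sum_powerset_erase_insert]
  rw [sum_comm' (t' := univ) (s' := id) (by simp)]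
  simp

theorem sum_sum_powerset_erase (g : Finset X → β) :
    ∑ x, ∑ S ∈ (univ.erase x).powerset, g S = ∑ S : Finset X, Sᶜ.card • g S := by
  rw [sum_comm' (t' := univ) (s' := compl) (by simp [subset_erase])]
  simp

noncomputable def weight (n k : ℕ) : ℝ :=
  (k ! : ℝ) * (n - k - 1)! / n !

theorem card_mul_weight_pred {n k : ℕ} (hk : k ≠ 0) (hkn : k ≤ n) :
    k * weight n (k - 1) = k ! * (n - k)! / n ! := by
  rw [weight, show n - (k - 1) - 1 = n - k by omega, ← mul_div_assoc, ← mul_assoc,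
    ← Nat.cast_mul, mul_factorial_pred hk]

theorem sub_mul_weight {n k : ℕ} (hkn : k < n) :
    ((n - k : ℕ) : ℝ) * weight n k = k ! * (n - k)! / n ! := by
  rw [weight, ← mul_div_assoc, mul_left_comm, ← Nat.cast_mul, mul_factorial_pred (by omega)]

theorem card_mul_weight_pred_sub_card_compl_mul_weight (T : Finset X) :
    T.card * weight (Fintype.card X) (T.card - 1) - Tᶜ.card * weight (Fintype.card X) T.card =
      (if T = univ then 1 else 0) - (if T = ∅ then 1 else 0) := by
  set n := Fintype.card X
  set c : ℝ := T.card ! * (n - T.card)! / (n ! : ℝ)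
  have hpos : T.card * weight n (T.card - 1) = if T = ∅ then 0 else c := by
    split_ifs with h
    · simp [h]
    · exact card_mul_weight_pred (by simpa using h) (card_le_univ T)
  have hneg : (Tᶜ.card : ℝ) * weight n T.card = if T = univ then 0 else c := by
    split_ifs with h
    · simp [h]
    · rw [card_compl]; exact sub_mul_weight ((card_lt_iff_ne_univ T).mpr h)
  rw [hpos, hneg]
  have : (n ! : ℝ) ≠ 0 := by positivity
  split_ifs <;> simp_all [c, n]

noncomputable def value (v : Finset X → ℝ) (x : X) : ℝ :=
  ∑ S ∈ (univ.erase x).powerset, weight (Fintype.card X) S.card * (v (insert x S) - v S)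

theorem sum_value (v : Finset X → ℝ) : ∑ x, value v x = v univ - v ∅ := by
  let w (T : Finset X) (k : ℕ) : ℝ := weight (Fintype.card X) k * v T
  have hins (x : X) : ∑ S ∈ (univ.erase x).powerset, w (insert x S) S.card =
      ∑ S ∈ (univ.erase x).powerset, w (insert x S) ((insert x S).card - 1) :=
    sum_congr rfl fun S hS => by
      rw [card_insert_of_notMem (by simpa [subset_erase] using hS), Nat.add_sub_cancel]
  calc ∑ x, value v x
      = ∑ x, ∑ S ∈ (univ.erase x).powerset, w (insert x S) S.card -
          ∑ x, ∑ S ∈ (univ.erase x).powerset, w S S.card := by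
        simp only [value, w, mul_sub, sum_sub_distrib]
    _ = ∑ T : Finset X, T.card • w T (T.card - 1) - ∑ T : Finset X, Tᶜ.card • w T T.card := by
        simp only [hins, sum_sum_powerset_erase_insert (fun T => w T (T.card - 1)),
          sum_sum_powerset_erase (fun T => w T T.card)]
    _ = ∑ T : Finset X, ((if T = univ then 1 else 0) - (if T = ∅ then 1 else 0)) * v T := by
        simp only [← card_mul_weight_pred_sub_card_compl_mul_weight, w, nsmul_eq_mul,
          ← sum_sub_distrib, sub_mul, mul_assoc]
    _ = v univ - v ∅ := by
        simp [sub_mul, sum_sub_distrib]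

end Shapley

theorem phi_univ (M : (X → Bool) → Bool) (e : X → Bool) :
    phi M e univ = if M e then 1 else 0 := by
  have : cw e univ = {e} := by
    ext e'
    simp [cw, funext_iff]
  rw [phi, this, sum_singleton]
  simp

theorem phi_empty (M : (X → Bool) → Bool) (e : X → Bool) :
    phi M e ∅ = ssat M / 2 ^ Fintype.card X := by
  simp [phi, cw, ssat, sum_boole, div_eq_inv_mul]

theorem shap_eq_value_phi (M : (X → Bool) → Bool) (e : X → Bool) (x : X) :
    shap M e x = Shapley.value (phi M e) x :=
  rfl

theorem shap_sum_eq (M : (X → Bool) → Bool) (e : X → Bool) :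
    ∑ x : X, shap M e x =
      (if M e then (1 : ℝ) else 0) - (ssat M : ℝ) / 2 ^ (Fintype.card X) := by
  simp only [shap_eq_value_phi, Shapley.sum_value, phi_univ, phi_empty]
end

section
/- For a Boolean classifier M over a finite feature set X with |X| = n, an entity e, and a natural number k ≤ n, define H(M,e,k) = Σ_{S ⊆ X, |S| = k} Σ_{e' ∈ cw(e,S)} M(e'). Then H(M,e,k) = Σ_{ℓ=k}^{n} C(ℓ,k) · #sat(M,e,ℓ), where #sat(M,e,ℓ) is the number of entities e'' accepted by M that agree with e on exactly ℓ features. -/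
open Finset

variable {X : Type*} [Fintype X] [DecidableEq X]

/-- The set of features on which `e` and `e'` coincide. -/
def sim (e e' : X → Bool) : Finset X :=
  Finset.univ.filter (fun x => e x = e' x)

/-- Number of entities accepted by `M` agreeing with `e` on exactly `k` features. -/
def ssatk (M : (X → Bool) → Bool) (e : X → Bool) (k : ℕ) : ℕ :=
  (Finset.univ.filter (fun e' : X → Bool => M e' = true ∧ (sim e e').card = k)).card
/-- `H(M,e,k) = Σ_{S ⊆ X, |S| = k} Σ_{e' ∈ cw(e,S)} M(e')`. -/
def Hcount (M : (X → Bool) → Bool) (e : X → Bool) (k : ℕ) : ℕ :=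
  ∑ S ∈ Finset.univ.powersetCard k,
    ∑ e' ∈ cw e S, (if M e' then 1 else 0)

/-!
Double counting: an accepted entity `e''` is counted in `H(M,e,k)` once for every `k`-subset
`S` of `sim(e,e'')`, i.e. `C(|sim(e,e'')|, k)` times. Grouping the accepted entities by
`ℓ = |sim(e,e'')|` gives the formula; the terms with `ℓ < k` vanish because `C(ℓ,k) = 0`.
-/

theorem mem_cw_iff_subset_sim {e e' : X → Bool} {S : Finset X} :
    e' ∈ cw e S ↔ S ⊆ sim e e' := by
  simp only [cw, sim, mem_filter, mem_univ, true_and, subset_iff, eq_comm]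

theorem Hcount_eq_sum_choose_card_sim (M : (X → Bool) → Bool) (e : X → Bool) (k : ℕ) :
    Hcount M e k = ∑ e' ∈ univ.filter (fun e' => M e' = true), (sim e e').card.choose k := by
  have swap : Hcount M e k =
      ∑ e', ∑ _S ∈ (sim e e').powersetCard k, if M e' then 1 else 0 := by
    refine sum_comm' fun S e' => ?_
    simp only [mem_cw_iff_subset_sim, mem_powersetCard, subset_univ, mem_univ, true_and, and_comm]
  rw [swap, sum_filter]
  refine sum_congr rfl fun e' _ => ?_
  rw [sum_const, card_powersetCard, smul_eq_mul]
  split_ifs <;> simp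

theorem sum_choose_card_sim_eq_sum_choose_mul_ssatk
    (M : (X → Bool) → Bool) (e : X → Bool) (k : ℕ) :
    ∑ e' ∈ univ.filter (fun e' => M e' = true), (sim e e').card.choose k =
      ∑ ℓ ∈ range (Fintype.card X + 1), ℓ.choose k * ssatk M e ℓ := by
  rw [← sum_fiberwise_of_maps_to (g := fun e' => (sim e e').card)
    fun e' _ => mem_range_succ_iff.mpr (card_filter_le _ _)]
  refine sum_congr rfl fun ℓ _ => ?_
  rw [filter_filter, sum_congr rfl fun e' he' => by rw [(mem_filter.mp he').2.2], sum_const,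
    smul_eq_mul, mul_comm, ssatk]

theorem Nat.sum_range_succ_choose_mul_eq_sum_Icc (f : ℕ → ℕ) (n k : ℕ) :
    ∑ ℓ ∈ range (n + 1), ℓ.choose k * f ℓ = ∑ ℓ ∈ Icc k n, ℓ.choose k * f ℓ := by
  refine (sum_subset (fun ℓ hℓ => mem_range_succ_iff.mpr (mem_Icc.mp hℓ).2)
    fun ℓ hℓ hℓ' => ?_).symm
  have hlt : ℓ < k := by
    rw [mem_range_succ_iff] at hℓ
    rw [mem_Icc] at hℓ'
    omega
  rw [Nat.choose_eq_zero_of_lt hlt, zero_mul]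

theorem H_eq_sum_choose_ssatk_general (M : (X → Bool) → Bool) (e : X → Bool) (k : ℕ) :
    Hcount M e k =
      ∑ ℓ ∈ Finset.Icc k (Fintype.card X), Nat.choose ℓ k * ssatk M e ℓ := by
  rw [Hcount_eq_sum_choose_card_sim, sum_choose_card_sim_eq_sum_choose_mul_ssatk,
    Nat.sum_range_succ_choose_mul_eq_sum_Icc]

theorem H_eq_sum_choose_ssatk (M : (X → Bool) → Bool) (e : X → Bool) (k : ℕ)
    (hk : k ≤ Fintype.card X) :
    Hcount M e k =
      ∑ ℓ ∈ Finset.Icc k (Fintype.card X), Nat.choose ℓ k * ssatk M e ℓ :=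
  H_eq_sum_choose_ssatk_general M e k
end

section
/- Let M₁ be a Boolean classifier over X₁ and M₂ over X₂ with X₁ ∩ X₂ = ∅, and let M over X₁ ∪ X₂ be their conjunction: M(e) = M₁(e|X₁) · M₂(e|X₂). Then for any entity e over X₁ ∪ X₂ and any k, #sat(M,e,k) = Σ_{i+j=k, 0≤i≤|X₁|, 0≤j≤|X₂|} #sat(M₁, e|X₁, i) · #sat(M₂, e|X₂, j). -/
/-!
Restricting to `X₁` and `X₂` identifies entities over `X₁ ⊕ X₂` with pairs of entities; under
this identification `M` is the conjunction of `M₁` and `M₂`, and `|sim e e'|` is the sum of the two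
restricted similarity counts. Sorting the accepted pairs by their pair of counts `(i, j)` with
`i + j = k` gives the convolution; the bounds `i ≤ |X₁|`, `j ≤ |X₂|` only drop terms that vanish.
-/

open Finset

variable {X : Type*} [Fintype X] [DecidableEq X]

lemma card_filter_product_add_eq {α β A : Type*} [AddMonoid A] [HasAntidiagonal A]
    [DecidableEq A] (s : Finset α) (t : Finset β) (f : α → A) (g : β → A) (k : A) :
    #{p ∈ s ×ˢ t | f p.1 + g p.2 = k} =
      ∑ ij ∈ antidiagonal k, #{a ∈ s | f a = ij.1} * #{b ∈ t | g b = ij.2} := by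
  rw [card_eq_sum_card_fiberwise (f := fun p => (f p.1, g p.2)) (t := antidiagonal k)
    (fun p hp => by simpa using (mem_filter.mp hp).2)]
  refine sum_congr rfl fun ij hij => ?_
  rw [← card_product, ← filter_product, filter_filter]
  congr 1
  refine filter_congr fun p _ => ?_
  rw [HasAntidiagonal.mem_antidiagonal] at hij
  rw [Prod.ext_iff]
  exact ⟨And.right, fun h => ⟨by rw [h.1, h.2, hij], h⟩⟩

lemma ssatk_eq_card_filter (M : (X → Bool) → Bool) (e : X → Bool) (k : ℕ) :
    ssatk M e k = #{e' ∈ {e' | M e' = true} | #(sim e e') = k} := by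
  rw [ssatk, filter_filter]

lemma ssatk_eq_zero_of_card_lt (M : (X → Bool) → Bool) (e : X → Bool) {k : ℕ}
    (hk : Fintype.card X < k) : ssatk M e k = 0 := by
  rw [ssatk, card_eq_zero, filter_eq_empty_iff]
  rintro e' - ⟨-, rfl⟩
  exact (card_filter_le _ _).not_gt hk

lemma card_sim_sum {X₁ X₂ : Type*} [Fintype X₁] [Fintype X₂] (e e' : X₁ ⊕ X₂ → Bool) :
    #(sim e e') = #(sim (e ∘ Sum.inl) (e' ∘ Sum.inl)) + #(sim (e ∘ Sum.inr) (e' ∘ Sum.inr)) := by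
  simp only [sim, card_filter, Fintype.sum_sum_type, Function.comp_apply]

lemma ssatk_sum_eq_card_filter_product {X₁ X₂ : Type*} [Fintype X₁] [DecidableEq X₁]
    [Fintype X₂] [DecidableEq X₂] (M₁ : (X₁ → Bool) → Bool) (M₂ : (X₂ → Bool) → Bool)
    (M : (X₁ ⊕ X₂ → Bool) → Bool) (hM : ∀ e, M e = (M₁ (e ∘ Sum.inl) && M₂ (e ∘ Sum.inr)))
    (e : X₁ ⊕ X₂ → Bool) (k : ℕ) :
    ssatk M e k = #{p ∈ ({f | M₁ f = true} : Finset _) ×ˢ ({g | M₂ g = true} : Finset _) |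
      #(sim (e ∘ Sum.inl) p.1) + #(sim (e ∘ Sum.inr) p.2) = k} := by
  refine card_equiv (Equiv.sumArrowEquivProdArrow X₁ X₂ Bool) fun e' => ?_
  simp only [mem_filter, mem_univ, true_and, mem_product, hM, Bool.and_eq_true, card_sim_sum,
    and_assoc]
  rfl

theorem ssatk_and_convolution {X₁ X₂ : Type*} [Fintype X₁] [DecidableEq X₁]
    [Fintype X₂] [DecidableEq X₂]
    (M₁ : (X₁ → Bool) → Bool) (M₂ : (X₂ → Bool) → Bool)
    (M : (X₁ ⊕ X₂ → Bool) → Bool)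
    (hM : ∀ e : X₁ ⊕ X₂ → Bool,
      M e = (M₁ (fun a => e (Sum.inl a)) && M₂ (fun b => e (Sum.inr b))))
    (e : X₁ ⊕ X₂ → Bool) (k : ℕ) :
    ssatk M e k =
      ∑ ij ∈ (Finset.HasAntidiagonal.antidiagonal k).filter
          (fun ij => ij.1 ≤ Fintype.card X₁ ∧ ij.2 ≤ Fintype.card X₂),
        ssatk M₁ (fun a => e (Sum.inl a)) ij.1 *
          ssatk M₂ (fun b => e (Sum.inr b)) ij.2 := by
  rw [ssatk_sum_eq_card_filter_product M₁ M₂ M hM,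
    card_filter_product_add_eq _ _ (fun f => #(sim _ f)) (fun g => #(sim _ g))]
  simp only [← ssatk_eq_card_filter]
  refine (sum_subset (filter_subset _ _) fun ij hk hij => ?_).symm
  rw [mem_filter, not_and, not_and_or, not_le, not_le] at hij
  rcases hij hk with h | h
  · rw [ssatk_eq_zero_of_card_lt M₁ _ h, zero_mul]
  · rw [ssatk_eq_zero_of_card_lt M₂ _ h, mul_zero]
end
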